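/- The product S_{ω₁} × S_{ω₁} is not a k_R-space. -/

import Mathlib

open Set Filter Topology Cardinal

/-- A `k`-space: a set is closed whenever its trace on every compact subset is closed. -/
def IsKSpace (X : Type*) [TopologicalSpace X] : Prop :=
  ∀ C : Set X, (∀ K : Set X, IsCompact K → IsClosed (Subtype.val ⁻¹' C : Set K)) → IsClosed C

/-- A `k_R`-space: every real-valued function which is continuous on each
compact subset is continuous. -/
def IsKRSpace (X : Type*) [TopologicalSpace X] : Prop :=
  ∀ f : X → ℝ, (∀ K : Set X, IsCompact K → ContinuousOn f K) → Continuous f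
/-- The sequential fan with spokes indexed by `κ`: underlying set is
`Option (κ × ℕ)`, with `none` the apex and `some (α, n)` the `n`-th point
of the `α`-th spoke. -/
def Fan (κ : Type*) : Type _ := Option (κ × ℕ)

/-- The quotient topology on the fan: each point `some (α, n)` is isolated and
a set containing the apex is open iff it contains a tail of every spoke. -/
instance Fan.instTopologicalSpace (κ : Type*) : TopologicalSpace (Fan κ) where
  IsOpen s := (none : Option (κ × ℕ)) ∈ s → ∀ α : κ, {n : ℕ | (some (α, n) : Option (κ × ℕ)) ∉ s}.Finite
  isOpen_univ := by intro _ α; exact Set.finite_empty.subset (fun n hn => hn trivial)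
  isOpen_inter := by
    intro s t hs ht hmem α
    refine ((hs hmem.1 α).union (ht hmem.2 α)).subset ?_
    intro n hn
    by_contra h
    simp only [Set.mem_union, Set.mem_setOf_eq] at h
    push_neg at h
    exact hn ⟨h.1, h.2⟩
  isOpen_sUnion := by
    intro S hS hmem α
    obtain ⟨s, hsS, hs⟩ := hmem
    refine (hS s hsS hs α).subset ?_
    intro n hn hns
    exact hn (Set.mem_sUnion.2 ⟨s, hsS, hns⟩)

/-- The apex of the sequential fan. -/
def Fan.apex {κ : Type*} : Fan κ := (none : Option (κ × ℕ))

/-- The `n`-th point of the `α`-th spoke of the sequential fan. -/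
def Fan.pt {κ : Type*} (α : κ) (n : ℕ) : Fan κ := (some (α, n) : Option (κ × ℕ))

/-!
Well-order `ι` in type `ω₁`, so that every `b` has countably many predecessors, enumerated
injectively by `e b : ι → ℕ`. The set `diagSet e` of points `(pt a (e b a), pt b (e b a))` with
`a < b` meets every compact set in finitely many isolated points, so its indicator is continuous
on compacta. But `(apex, apex)` lies in its closure: given the tail thresholds `u, v` of a basic
neighbourhood, some fibre `u⁻¹ {n}` is uncountable, some `b` lies above infinitely many of its
points `a`, and as `e b` is injective on them, `e b a` exceeds both `n` and `v b` for one of them.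
-/

theorem exists_lt_le_le_of_countable_Iio {ι : Type*} [LinearOrder ι]
    (hIio : ∀ b : ι, (Iio b).Countable) (hunc : ¬ Countable ι) {e : ι → ι → ℕ}
    (he : ∀ b, InjOn (e b) (Iio b)) (u v : ι → ℕ) :
    ∃ a b, a < b ∧ u a ≤ e b a ∧ v b ≤ e b a := by
  obtain ⟨n, hn⟩ : ∃ n, (u ⁻¹' {n}).Infinite := by
    by_contra! h
    refine hunc (countable_univ_iff.1 ?_)
    rw [← preimage_univ (f := u), ← iUnion_of_singleton ℕ, preimage_iUnion]
    exact countable_iUnion fun n => (h n).countable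
  set A := range fun k => (hn.natEmbedding _ k : ι)
  have hAn : A ⊆ u ⁻¹' {n} := range_subset_iff.2 fun k => (hn.natEmbedding _ k).2
  have hA : A.Infinite :=
    infinite_range_of_injective (Subtype.val_injective.comp (hn.natEmbedding _).injective)
  obtain ⟨b, hb⟩ : ∃ b, ∀ a ∈ A, a < b := by
    have hcount : (⋃ a ∈ A, Iic a).Countable :=
      (countable_range _).biUnion fun a _ => by simpa [← Iio_insert] using (hIio a).insert a
    obtain ⟨b, hb⟩ := (ne_univ_iff_exists_notMem _).1 fun h =>
      hunc (countable_univ_iff.1 (h ▸ hcount))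
    exact ⟨b, fun a ha => not_le.1 fun hba => hb (mem_biUnion ha hba)⟩
  obtain ⟨_, ⟨a, ha, rfl⟩, hlt⟩ := (hA.image ((he b).mono hb)).exists_gt (max n (v b))
  have hua : u a = n := hAn ha
  exact ⟨a, b, hb a ha, by omega, by omega⟩

theorem continuousOn_indicator_of_finite_inter {X M : Type*} [TopologicalSpace X] [T1Space X]
    [TopologicalSpace M] [Zero M] {D K : Set X} (hD : ∀ x ∈ D, IsOpen {x})
    (hDK : (D ∩ K).Finite) {f : X → M} (hf : Continuous f) :
    ContinuousOn (D.indicator f) K := by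
  have hclopen : IsClopen (D ∩ K) :=
    ⟨hDK.isClosed, biUnion_of_singleton (D ∩ K) ▸ isOpen_biUnion fun x hx => hD x hx.1⟩
  refine (hclopen.continuous_indicator hf).continuousOn.congr fun x hx => ?_
  by_cases hxD : x ∈ D <;> simp [hxD, hx]

namespace Fan

variable {κ : Type*}

theorem isOpen_iff {s : Set (Fan κ)} :
    IsOpen s ↔ (apex ∈ s → ∀ α : κ, {n : ℕ | pt α n ∉ s}.Finite) :=
  Iff.rfl

@[simp]
theorem pt_inj {α β : κ} {n m : ℕ} : pt α n = pt β m ↔ α = β ∧ n = m :=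
  Option.some_inj.trans Prod.ext_iff

theorem pt_injective (α : κ) : Function.Injective (pt α) :=
  fun _ _ h => (pt_inj.1 h).2

@[simp]
theorem pt_ne_apex (α : κ) (n : ℕ) : pt α n ≠ apex :=
  Option.some_ne_none _

theorem isOpen_singleton_pt (α : κ) (n : ℕ) : IsOpen ({pt α n} : Set (Fan κ)) :=
  fun h _ => absurd h.symm (pt_ne_apex α n)

theorem isClosed_of_finite_spokes {s : Set (Fan κ)} (hfin : ∀ α, {n | pt α n ∈ s}.Finite) :
    IsClosed s :=
  isOpen_compl_iff.1 <| isOpen_iff.2 fun _ α => by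
    simpa only [mem_compl_iff, not_not] using hfin α

instance : T1Space (Fan κ) where
  t1 _ := isClosed_of_finite_spokes fun α =>
    (subsingleton_singleton.preimage (pt_injective α)).finite

theorem isDiscrete_of_apex_notMem {s : Set (Fan κ)} (hs : apex ∉ s) : IsDiscrete s := by
  refine isDiscrete_iff_forall_mem_exists_isOpen.2 fun x hx =>
    ⟨{x}, ?_, inter_eq_left.2 (singleton_subset_iff.2 hx)⟩
  rcases x with _ | ⟨α, n⟩
  · exact absurd hx hs
  · exact isOpen_singleton_pt α n

theorem finite_spokes_of_isCompact {K : Set (Fan κ)} (hK : IsCompact K) :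
    {α | ∃ n, pt α n ∈ K}.Finite := by
  set S := {α | ∃ n, pt α n ∈ K}
  choose h hh using fun α : S => α.2
  -- one point on each spoke meeting `K`: a closed discrete subset of `K`, hence finite
  set T := range fun α : S => pt α.1 (h α)
  have hT : IsClosed T := by
    refine isClosed_of_finite_spokes fun α => Set.Subsingleton.finite ?_
    rintro n ⟨β, hβ⟩ m ⟨γ, hγ⟩
    obtain ⟨rfl, rfl⟩ := pt_inj.1 hβ
    obtain ⟨hγβ, rfl⟩ := pt_inj.1 hγ
    rw [Subtype.ext hγβ]
  have hTfin : T.Finite := (hK.of_isClosed_subset hT (range_subset_iff.2 hh)).finite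
    (isDiscrete_of_apex_notMem (by simp [T]))
  have : Finite S := (finite_range_iff fun β γ h => Subtype.ext (pt_inj.1 h).1).1 hTfin
  exact toFinite S

theorem exists_tail_subset_of_mem_nhds_apex {U : Set (Fan κ)} (hU : U ∈ 𝓝 apex) :
    ∃ u : κ → ℕ, ∀ α n, u α ≤ n → pt α n ∈ U := by
  obtain ⟨V, hVU, hV, hapex⟩ := mem_nhds_iff.1 hU
  choose N hN using fun α => (isOpen_iff.1 hV hapex α).bddAbove
  exact ⟨fun α => N α + 1, fun α n hn => hVU (by_contra fun h => not_lt.2 (hN α h) hn)⟩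

variable {ι : Type*}

def diagPt (e : ι → ι → ℕ) (a b : ι) : Fan ι × Fan ι :=
  (pt a (e b a), pt b (e b a))

def diagSet [LT ι] (e : ι → ι → ℕ) : Set (Fan ι × Fan ι) :=
  {x | ∃ a b, a < b ∧ diagPt e a b = x}

theorem isOpen_singleton_diagPt (e : ι → ι → ℕ) (a b : ι) : IsOpen {diagPt e a b} := by
  rw [diagPt, ← singleton_prod_singleton]
  exact (isOpen_singleton_pt _ _).prod (isOpen_singleton_pt _ _)

theorem apex_notMem_diagSet [LT ι] (e : ι → ι → ℕ) : (apex, apex) ∉ diagSet e :=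
  fun ⟨a, _, _, h⟩ => pt_ne_apex a _ (congrArg Prod.fst h)

theorem finite_diagSet_inter_of_isCompact [LT ι] (e : ι → ι → ℕ)
    {K : Set (Fan ι × Fan ι)} (hK : IsCompact K) : (diagSet e ∩ K).Finite := by
  refine (((finite_spokes_of_isCompact (hK.image continuous_fst)).prod
    (finite_spokes_of_isCompact (hK.image continuous_snd))).image
      fun ab => diagPt e ab.1 ab.2).subset ?_
  rintro _ ⟨⟨a, b, -, rfl⟩, hx⟩
  exact ⟨(a, b), ⟨⟨_, mem_image_of_mem _ hx⟩, ⟨_, mem_image_of_mem _ hx⟩⟩, rfl⟩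

theorem continuousOn_indicator_diagSet [LT ι] (e : ι → ι → ℕ) {K : Set (Fan ι × Fan ι)}
    (hK : IsCompact K) : ContinuousOn ((diagSet e).indicator fun _ => (1 : ℝ)) K :=
  continuousOn_indicator_of_finite_inter
    (by rintro _ ⟨a, b, -, rfl⟩; exact isOpen_singleton_diagPt e a b)
    (finite_diagSet_inter_of_isCompact e hK) continuous_const

section LinearOrder

variable [LinearOrder ι]

theorem apex_mem_closure_diagSet (hIio : ∀ b : ι, (Iio b).Countable) (hunc : ¬ Countable ι)
    {e : ι → ι → ℕ} (he : ∀ b, InjOn (e b) (Iio b)) :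
    (apex, apex) ∈ closure (diagSet e) := by
  refine mem_closure_iff_nhds.2 fun t ht => ?_
  obtain ⟨U, hU, V, hV, hUV⟩ := mem_nhds_prod_iff.1 ht
  obtain ⟨u, hu⟩ := exists_tail_subset_of_mem_nhds_apex hU
  obtain ⟨v, hv⟩ := exists_tail_subset_of_mem_nhds_apex hV
  obtain ⟨a, b, hab, hua, hvb⟩ := exists_lt_le_le_of_countable_Iio hIio hunc he u v
  exact ⟨_, hUV ⟨hu a _ hua, hv b _ hvb⟩, a, b, hab, rfl⟩

theorem not_isKRSpace_prod_of_countable_Iio (hIio : ∀ b : ι, (Iio b).Countable)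
    (hunc : ¬ Countable ι) : ¬ IsKRSpace (Fan ι × Fan ι) := by
  intro hKR
  choose e he using fun b => countable_iff_exists_injOn.1 (hIio b)
  have hcont := hKR _ fun K hK => continuousOn_indicator_diagSet e hK
  have hone := map_mem_closure hcont (apex_mem_closure_diagSet hIio hunc he)
    fun x hx => mem_singleton_iff.2 (indicator_of_mem hx _)
  rw [closure_singleton, mem_singleton_iff, indicator_of_notMem (apex_notMem_diagSet e)] at hone
  exact zero_ne_one hone

end LinearOrder

end Fan

/-- The product `S_{ω₁} × S_{ω₁}` is not a `k_R`-space. -/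
theorem not_isKRSpace_fan_aleph_one_square (ι : Type) (hι : #ι = aleph 1) :
    ¬ IsKRSpace (Fan ι × Fan ι) := by
  obtain ⟨_, _, hr⟩ := exists_ord_eq_type_lt ι
  refine Fan.not_isKRSpace_prod_of_countable_Iio (fun b => ?_) ?_
  · rw [← le_aleph0_iff_set_countable, ← lt_aleph_one_iff, ← hι]
    exact mk_Iio_lt b hr
  · rw [← mk_le_aleph0_iff, hι, not_le]
    exact aleph0_lt_aleph_one
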